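/- arXiv:2107.10461 — 2 statements merged into one kernel-verified Lean document; each statement's English description precedes it below -/
import Mathlib

section
/- Consider the set F of tuples (B, λ, ε, ν) with B = (b_{k,n}) ∈ ℝ^{K×N}, λ = (λ_x)_{x∈{0,1}^K}, and ε, ν ∈ ℝ satisfying: 0 ≤ ε ≤ 1; b_{k,n} ≥ 0 for all k,n; Σ_{n=1}^N b_{k,n} = ε for every k; λ_x ≥ 0 for all x; and ν + λ_x + T(B,1,x) ≥ 0 for all x ∈ {0,1}^K. Define the objective h(B,λ,ν) = (Σ_x p̲_x − 1)·ν + Σ_x ( (p̲_x − p̄_x)·λ_x + p̲_x · T(B,1,x) ). Suppose (B*, λ*, ε*, ν*) ∈ F maximizes h over F and ε* > 0. Then A* = B*/ε* is a feasible preamble selection matrix and (A*, ε*) maximizes the worst-case average throughput: for every feasible A and every ε ∈ [0,1], min_{y∈P} \bar T(A*, ε*, y) ≥ min_{y∈P} \bar T(A, ε, y). -/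
open Finset

/-- Value in {0,1} ⊆ ℝ of a binary activity state coordinate. -/
noncomputable def xv {K : ℕ} (x : Fin K → Bool) (k : Fin K) : ℝ := if x k then 1 else 0

/-- Conditional throughput T(A, ε, x). -/
noncomputable def condT {K N : ℕ} (A : Fin K → Fin N → ℝ) (ε : ℝ) (x : Fin K → Bool) : ℝ :=
  ∑ n : Fin N, ∑ k : Fin K,
    xv x k * A k n * ε * ∏ l ∈ Finset.univ.erase k, (1 - xv x l * A l n * ε)

/-- Average throughput  \bar T(A, ε, y) for a (not necessarily probability) vector y. -/
noncomputable def avgT {K N : ℕ} (A : Fin K → Fin N → ℝ) (ε : ℝ)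
    (y : (Fin K → Bool) → ℝ) : ℝ :=
  ∑ x : Fin K → Bool, y x * condT A ε x

/-- Lower bound p̲_x. -/
noncomputable def pl {K : ℕ} (phat δ : (Fin K → Bool) → ℝ) (x : Fin K → Bool) : ℝ :=
  max (phat x - δ x) 0

/-- Upper bound p̄_x. -/
noncomputable def pu {K : ℕ} (phat δ : (Fin K → Bool) → ℝ) (x : Fin K → Bool) : ℝ :=
  min (phat x + δ x) 1

/-- The uncertainty set 𝒫. -/
def Pset {K : ℕ} (phat δ : (Fin K → Bool) → ℝ) : Set ((Fin K → Bool) → ℝ) :=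
  {y | (∀ x, pl phat δ x ≤ y x ∧ y x ≤ pu phat δ x) ∧ ∑ x : Fin K → Bool, y x = 1}

/-- The feasible set of the equivalent problem (Problem 4). -/
def InF {K N : ℕ} (phat δ : (Fin K → Bool) → ℝ) (B : Fin K → Fin N → ℝ)
    (lam : (Fin K → Bool) → ℝ) (ε ν : ℝ) : Prop :=
  0 ≤ ε ∧ ε ≤ 1 ∧ (∀ k n, 0 ≤ B k n) ∧ (∀ k, ∑ n, B k n = ε) ∧
  (∀ x, 0 ≤ lam x) ∧ (∀ x : Fin K → Bool, 0 ≤ ν + lam x + condT B 1 x)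

/-- The objective function of the equivalent problem (Problem 4). -/
noncomputable def dualObj {K N : ℕ} (phat δ : (Fin K → Bool) → ℝ)
    (B : Fin K → Fin N → ℝ) (lam : (Fin K → Bool) → ℝ) (ν : ℝ) : ℝ :=
  (∑ x : Fin K → Bool, pl phat δ x - 1) * ν +
    ∑ x : Fin K → Bool,
      ((pl phat δ x - pu phat δ x) * lam x + pl phat δ x * condT B 1 x)

lemma condT_eq {K N : ℕ} (A B : Fin K → Fin N → ℝ) (ε : ℝ)
    (h : ∀ k n, B k n = A k n * ε) (x : Fin K → Bool) :
    condT B 1 x = condT A ε x := by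
  unfold condT
  refine Finset.sum_congr rfl fun n _ => Finset.sum_congr rfl fun k _ => ?_
  have hp : ∀ l ∈ Finset.univ.erase k, (1 - xv x l * B l n * 1) = (1 - xv x l * A l n * ε) := by
    intro l _; rw [h l n]; ring
  rw [Finset.prod_congr rfl hp, h k n]
  ring


lemma pl_le_pu {K : ℕ} (phat δ : (Fin K → Bool) → ℝ)
    (hphat0 : ∀ x, 0 ≤ phat x) (hphat1 : ∑ x : Fin K → Bool, phat x = 1)
    (hδ : ∀ x, 0 ≤ δ x) (x : Fin K → Bool) : pl phat δ x ≤ pu phat δ x := by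
  have h1 : phat x ≤ 1 := by
    rw [← hphat1]; exact Finset.single_le_sum (fun i _ => hphat0 i) (Finset.mem_univ x)
  have h2 := hδ x
  have h3 := hphat0 x
  unfold pl pu
  apply max_le
  · exact le_min (by linarith) (by linarith)
  · exact le_min (by linarith) zero_le_one

lemma weak_dual {K : ℕ} (phat δ : (Fin K → Bool) → ℝ)
    (T lam : (Fin K → Bool) → ℝ) (ν : ℝ)
    (hlam : ∀ x, 0 ≤ lam x) (hcon : ∀ x, 0 ≤ ν + lam x + T x)
    (y : (Fin K → Bool) → ℝ) (hy : y ∈ Pset phat δ) :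
    (∑ x : Fin K → Bool, pl phat δ x - 1) * ν +
      ∑ x : Fin K → Bool, ((pl phat δ x - pu phat δ x) * lam x + pl phat δ x * T x)
      ≤ ∑ x : Fin K → Bool, y x * T x := by
  obtain ⟨hb, hs⟩ := hy
  have key : ∑ x : Fin K → Bool, (pl phat δ x * (ν + lam x + T x) - pu phat δ x * lam x)
      ≤ ∑ x : Fin K → Bool, (y x * (ν + lam x + T x) - y x * lam x) := by
    refine Finset.sum_le_sum fun x _ => ?_
    have h1 : 0 ≤ (y x - pl phat δ x) * (ν + lam x + T x) :=
      mul_nonneg (by linarith [(hb x).1]) (hcon x)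
    have h2 : 0 ≤ (pu phat δ x - y x) * lam x :=
      mul_nonneg (by linarith [(hb x).2]) (hlam x)
    nlinarith [h1, h2]
  have e1 : ∑ x : Fin K → Bool, (pl phat δ x * (ν + lam x + T x) - pu phat δ x * lam x)
      = (∑ x : Fin K → Bool, pl phat δ x) * ν +
        ∑ x : Fin K → Bool, ((pl phat δ x - pu phat δ x) * lam x + pl phat δ x * T x) := by
    have h : ∀ x ∈ (Finset.univ : Finset (Fin K → Bool)),
        pl phat δ x * (ν + lam x + T x) - pu phat δ x * lam x
        = pl phat δ x * ν + ((pl phat δ x - pu phat δ x) * lam x + pl phat δ x * T x) :=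
      fun x _ => by ring
    rw [Finset.sum_congr rfl h, Finset.sum_add_distrib, ← Finset.sum_mul]
  have e2 : ∑ x : Fin K → Bool, (y x * (ν + lam x + T x) - y x * lam x)
      = ν + ∑ x : Fin K → Bool, y x * T x := by
    have h : ∀ x ∈ (Finset.univ : Finset (Fin K → Bool)),
        y x * (ν + lam x + T x) - y x * lam x = y x * ν + y x * T x := fun x _ => by ring
    rw [Finset.sum_congr rfl h, Finset.sum_add_distrib, ← Finset.sum_mul, hs, one_mul]
  rw [e1, e2] at key
  linarith

lemma strong_dual {K : ℕ} (phat δ : (Fin K → Bool) → ℝ)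
    (hphat0 : ∀ x, 0 ≤ phat x) (hphat1 : ∑ x : Fin K → Bool, phat x = 1)
    (hδ : ∀ x, 0 ≤ δ x) (T : (Fin K → Bool) → ℝ) :
    ∃ y ∈ Pset phat δ, ∃ lam : (Fin K → Bool) → ℝ, ∃ ν : ℝ,
      (∀ x, 0 ≤ lam x) ∧ (∀ x, 0 ≤ ν + lam x + T x) ∧
      ∑ x : Fin K → Bool, y x * T x =
        (∑ x : Fin K → Bool, pl phat δ x - 1) * ν +
          ∑ x : Fin K → Bool,
            ((pl phat δ x - pu phat δ x) * lam x + pl phat δ x * T x) := by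
  classical
  have hPQ : ∀ x, pl phat δ x ≤ pu phat δ x := pl_le_pu phat δ hphat0 hphat1 hδ
  have hsumP : ∑ x : Fin K → Bool, pl phat δ x ≤ 1 := by
    rw [← hphat1]
    exact Finset.sum_le_sum fun x _ => max_le (by linarith [hδ x]) (hphat0 x)
  have hsumQ : (1 : ℝ) ≤ ∑ x : Fin K → Bool, pu phat δ x := by
    rw [← hphat1]
    refine Finset.sum_le_sum fun x _ => le_min (by linarith [hδ x]) ?_
    rw [← hphat1]
    exact Finset.single_le_sum (fun i _ => hphat0 i) (Finset.mem_univ x)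
  set U : ℝ → ℝ := fun s => ∑ x : Fin K → Bool,
    (if T x ≤ s then pu phat δ x else pl phat δ x) with hUdef
  set V : Finset ℝ := Finset.image T Finset.univ with hVdef
  have hVne : V.Nonempty := Finset.univ_nonempty.image T
  set W : Finset ℝ := V.filter (fun v => 1 ≤ U v) with hWdef
  have hWne : W.Nonempty := by
    refine ⟨V.max' hVne, Finset.mem_filter.mpr ⟨V.max'_mem hVne, ?_⟩⟩
    have hU : U (V.max' hVne) = ∑ x : Fin K → Bool, pu phat δ x := by
      refine Finset.sum_congr rfl fun x _ => ?_
      exact if_pos (V.le_max' (T x) (Finset.mem_image_of_mem T (Finset.mem_univ x)))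
    rw [hU]; exact hsumQ
  set t := W.min' hWne with htdef
  have htW : t ∈ W := W.min'_mem hWne
  have hUt : (1:ℝ) ≤ ∑ x : Fin K → Bool,
      (if T x ≤ t then pu phat δ x else pl phat δ x) := (Finset.mem_filter.mp htW).2
  set L : ℝ := ∑ x : Fin K → Bool,
    (if T x < t then pu phat δ x else pl phat δ x) with hLdef
  have hLt : L ≤ 1 := by
    by_cases h : ∃ x, T x < t
    · obtain ⟨x0, hx0⟩ := h
      set V' : Finset ℝ := V.filter (fun v => v < t) with hV'def
      have hV'ne : V'.Nonempty :=
        ⟨T x0, Finset.mem_filter.mpr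
          ⟨Finset.mem_image_of_mem T (Finset.mem_univ x0), hx0⟩⟩
      set t' := V'.max' hV'ne with ht'def
      have ht'V : t' ∈ V := (Finset.mem_filter.mp (V'.max'_mem hV'ne)).1
      have ht'lt : t' < t := (Finset.mem_filter.mp (V'.max'_mem hV'ne)).2
      have hLU : L = U t' := by
        refine Finset.sum_congr rfl fun x _ => ?_
        by_cases hx : T x < t
        · rw [if_pos hx, if_pos (V'.le_max' (T x)
            (Finset.mem_filter.mpr ⟨Finset.mem_image_of_mem T (Finset.mem_univ x), hx⟩))]
        · rw [if_neg hx, if_neg (fun hle => hx (lt_of_le_of_lt hle ht'lt))]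
      have hnot : ¬ (1 ≤ U t') := by
        intro hc
        have := W.min'_le t' (Finset.mem_filter.mpr ⟨ht'V, hc⟩)
        linarith
      rw [hLU]; linarith [not_le.mp hnot]
    · push_neg at h
      have hL : L = ∑ x : Fin K → Bool, pl phat δ x :=
        Finset.sum_congr rfl fun x _ => if_neg (not_lt.mpr (h x))
      rw [hL]; exact hsumP
  set d : ℝ := ∑ x : Fin K → Bool,
      ((if T x ≤ t then pu phat δ x else pl phat δ x)
        - (if T x < t then pu phat δ x else pl phat δ x)) with hddef
  have hdUL : d = (∑ x : Fin K → Bool, (if T x ≤ t then pu phat δ x else pl phat δ x)) - L := by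
    rw [hddef, hLdef, Finset.sum_sub_distrib]
  have hd0 : 0 ≤ d := by
    rw [hddef]
    refine Finset.sum_nonneg fun x _ => ?_
    rcases lt_trichotomy (T x) t with h | h | h
    · rw [if_pos h.le, if_pos h]; linarith
    · rw [if_pos h.le, if_neg (by simp [h])]; linarith [hPQ x]
    · rw [if_neg (not_le.mpr h), if_neg (not_lt.mpr h.le)]; linarith
  have hdpos : d ≠ 0 → 0 < d := fun h => lt_of_le_of_ne hd0 (Ne.symm h)
  set θ : ℝ := if d = 0 then 0 else (1 - L) / d with hθdef
  have hθ0 : 0 ≤ θ := by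
    rw [hθdef]; split
    · exact le_refl 0
    · next h => exact div_nonneg (by linarith) (hdpos h).le
  have hθ1 : θ ≤ 1 := by
    rw [hθdef]; split
    · exact zero_le_one
    · next h => rw [div_le_one (hdpos h)]; linarith [hdUL]
  have hθd : θ * d = 1 - L := by
    rw [hθdef]; split
    · next h =>
        have : L = 1 := by
          have := hdUL; rw [h] at this; linarith
        rw [this]; ring
    · next h => exact div_mul_cancel₀ _ h
  set y : (Fin K → Bool) → ℝ := fun x =>
    if T x < t then pu phat δ x
    else if T x = t then pl phat δ x + θ * (pu phat δ x - pl phat δ x)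
    else pl phat δ x with hydef
  have hyval : ∀ x, y x =
      (if T x < t then pu phat δ x else pl phat δ x)
      + θ * ((if T x ≤ t then pu phat δ x else pl phat δ x)
          - (if T x < t then pu phat δ x else pl phat δ x)) := by
    intro x
    rcases lt_trichotomy (T x) t with h | h | h
    · rw [hydef]; simp only [if_pos h, if_pos h.le]; ring
    · rw [hydef]
      simp only [if_neg (by simp [h] : ¬ T x < t), if_pos h, if_pos h.le]
    · rw [hydef]
      simp only [if_neg (not_lt.mpr h.le), if_neg (ne_of_gt h), if_neg (not_le.mpr h)]
      ring
  have hysum : ∑ x : Fin K → Bool, y x = 1 := by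
    rw [Finset.sum_congr rfl (fun x _ => hyval x), Finset.sum_add_distrib,
      ← Finset.mul_sum, ← hddef, ← hLdef]
    linarith [hθd]
  have hybds : ∀ x, pl phat δ x ≤ y x ∧ y x ≤ pu phat δ x := by
    intro x
    have hq := hPQ x
    rcases lt_trichotomy (T x) t with h | h | h
    · rw [hydef]; simp only [if_pos h]; exact ⟨hq, le_refl _⟩
    · rw [hydef]
      simp only [if_neg (by simp [h] : ¬ T x < t), if_pos h]
      constructor
      · nlinarith
      · nlinarith
    · rw [hydef]
      simp only [if_neg (not_lt.mpr h.le), if_neg (ne_of_gt h)]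
      exact ⟨le_refl _, hq⟩
  refine ⟨y, ⟨hybds, hysum⟩, fun x => max (t - T x) 0, -t, fun x => le_max_right _ _,
    ?_, ?_⟩
  · intro x
    show 0 ≤ -t + max (t - T x) 0 + T x
    rcases le_total (T x) t with h | h
    · rw [max_eq_left (by linarith)]; linarith
    · rw [max_eq_right (by linarith)]; linarith
  · have lhs : ∑ x : Fin K → Bool, y x * T x
        = (∑ x : Fin K → Bool, y x * (T x - t)) + t := by
      rw [show ∑ x : Fin K → Bool, y x * T x
          = ∑ x : Fin K → Bool, (y x * (T x - t) + y x * t) from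
        Finset.sum_congr rfl (fun x _ => by ring), Finset.sum_add_distrib,
        ← Finset.sum_mul, hysum, one_mul]
    have rhs : (∑ x : Fin K → Bool, pl phat δ x - 1) * (-t) +
        ∑ x : Fin K → Bool,
          ((pl phat δ x - pu phat δ x) * max (t - T x) 0 + pl phat δ x * T x)
        = (∑ x : Fin K → Bool,
            (pl phat δ x * (T x - t) + (pl phat δ x - pu phat δ x) * max (t - T x) 0)) + t := by
      rw [show ∑ x : Fin K → Bool,
            (pl phat δ x * (T x - t) + (pl phat δ x - pu phat δ x) * max (t - T x) 0)
          = ∑ x : Fin K → Bool,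
            (((pl phat δ x - pu phat δ x) * max (t - T x) 0 + pl phat δ x * T x)
              + pl phat δ x * (-t)) from
        Finset.sum_congr rfl (fun x _ => by ring)]
      simp only [Finset.sum_add_distrib, ← Finset.sum_mul]
      ring
    rw [lhs, rhs]
    have hterm : ∀ x ∈ (Finset.univ : Finset (Fin K → Bool)), y x * (T x - t)
        = pl phat δ x * (T x - t) + (pl phat δ x - pu phat δ x) * max (t - T x) 0 := by
      intro x _
      rcases lt_trichotomy (T x) t with h | h | h
      · rw [hydef]
        simp only [if_pos h, max_eq_left (by linarith : (0:ℝ) ≤ t - T x)]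
        ring
      · rw [hydef]
        simp only [if_neg (by simp [h] : ¬ T x < t), if_pos h, h, sub_self, max_self]
        ring
      · rw [hydef]
        simp only [if_neg (not_lt.mpr h.le), if_neg (ne_of_gt h),
          max_eq_right (by linarith : t - T x ≤ 0)]
        ring
    rw [Finset.sum_congr rfl hterm]

theorem stmt_10 (K N : ℕ) (hK : 1 ≤ K) (hN : 1 ≤ N)
    (phat δ : (Fin K → Bool) → ℝ)
    (hphat0 : ∀ x, 0 ≤ phat x) (hphat1 : ∑ x : Fin K → Bool, phat x = 1)
    (hδ : ∀ x, 0 ≤ δ x ∧ δ x < 1)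
    (Bstar : Fin K → Fin N → ℝ) (lamstar : (Fin K → Bool) → ℝ) (εstar νstar : ℝ)
    (hfeas : InF phat δ Bstar lamstar εstar νstar)
    (hopt : ∀ (B : Fin K → Fin N → ℝ) (lam : (Fin K → Bool) → ℝ) (ε ν : ℝ),
      InF phat δ B lam ε ν → dualObj phat δ B lam ν ≤ dualObj phat δ Bstar lamstar νstar)
    (hεpos : 0 < εstar) :
    (∀ k n, 0 ≤ Bstar k n / εstar) ∧
    (∀ k, ∑ n, Bstar k n / εstar = 1) ∧
    (∀ (A : Fin K → Fin N → ℝ) (ε : ℝ),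
      (∀ k n, 0 ≤ A k n) → (∀ k, ∑ n, A k n = 1) → ε ∈ Set.Icc (0 : ℝ) 1 →
      sInf {t : ℝ | ∃ y ∈ Pset phat δ, t = avgT A ε y} ≤
      sInf {t : ℝ | ∃ y ∈ Pset phat δ, t = avgT (fun k n => Bstar k n / εstar) εstar y}) := by
  obtain ⟨hε0, hε1, hB0, hBsum, hlam0, hcon⟩ := hfeas
  have hεne : εstar ≠ 0 := ne_of_gt hεpos
  have hδ0 : ∀ x, 0 ≤ δ x := fun x => (hδ x).1
  refine ⟨fun k n => div_nonneg (hB0 k n) hε0, fun k => ?_, ?_⟩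
  · rw [← Finset.sum_div, hBsum k, div_self hεne]
  intro A ε hA hAs hε
  -- the candidate optimum matrix in normalized form
  have hTstar : ∀ x, condT (fun k n => Bstar k n / εstar) εstar x = condT Bstar 1 x :=
    fun x => (condT_eq (fun k n => Bstar k n / εstar) Bstar εstar
      (fun k n => (div_mul_cancel₀ _ hεne).symm) x).symm
  -- nonemptiness of the optimum feasible-set image
  obtain ⟨y0, hy0, -⟩ := strong_dual phat δ hphat0 hphat1 hδ0 (condT Bstar 1)
  have hne : {t : ℝ | ∃ y ∈ Pset phat δ, t = avgT (fun k n => Bstar k n / εstar) εstar y}.Nonempty :=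
    ⟨avgT (fun k n => Bstar k n / εstar) εstar y0, y0, hy0, rfl⟩
  -- lower boundedness of the (A, ε) image
  have hbdd : BddBelow {t : ℝ | ∃ y ∈ Pset phat δ, t = avgT A ε y} := by
    refine ⟨∑ x : Fin K → Bool, -(|condT A ε x|), ?_⟩
    rintro s ⟨y, ⟨hb, -⟩, rfl⟩
    unfold avgT
    refine Finset.sum_le_sum fun x _ => ?_
    have hy0' : 0 ≤ y x := le_trans (le_max_right _ _) (hb x).1
    have hy1' : y x ≤ 1 := (hb x).2.trans (min_le_right _ _)
    rcases le_total 0 (condT A ε x) with h | h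
    · have := mul_nonneg hy0' h
      rw [abs_of_nonneg h]; linarith
    · rw [abs_of_nonpos h]; nlinarith
  -- strong duality applied to (A, ε)
  obtain ⟨y, hy, lam, ν, hlam, hconB, heq⟩ :=
    strong_dual phat δ hphat0 hphat1 hδ0 (condT (fun k n => A k n * ε) 1)
  have hInF : InF phat δ (fun k n => A k n * ε) lam ε ν :=
    ⟨hε.1, hε.2, fun k n => mul_nonneg (hA k n) hε.1,
      fun k => by rw [← Finset.sum_mul, hAs k, one_mul], hlam, hconB⟩
  have hTB : ∀ x, condT A ε x = condT (fun k n => A k n * ε) 1 x :=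
    fun x => (condT_eq A (fun k n => A k n * ε) ε (fun k n => rfl) x).symm
  calc sInf {t : ℝ | ∃ y ∈ Pset phat δ, t = avgT A ε y}
      ≤ avgT A ε y := csInf_le hbdd ⟨y, hy, rfl⟩
    _ = dualObj phat δ (fun k n => A k n * ε) lam ν := by
        unfold avgT dualObj
        rw [Finset.sum_congr rfl fun x _ => by rw [hTB x]]
        exact heq
    _ ≤ dualObj phat δ Bstar lamstar νstar := hopt _ lam ε ν hInF
    _ ≤ sInf {t : ℝ | ∃ y ∈ Pset phat δ, t = avgT (fun k n => Bstar k n / εstar) εstar y} := by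
        refine le_csInf hne ?_
        rintro s ⟨y', hy', rfl⟩
        have hw := weak_dual phat δ (condT Bstar 1) lamstar νstar hlam0 hcon y' hy'
        unfold dualObj avgT
        calc (∑ x : Fin K → Bool, pl phat δ x - 1) * νstar +
              ∑ x : Fin K → Bool, ((pl phat δ x - pu phat δ x) * lamstar x
                + pl phat δ x * condT Bstar 1 x)
            ≤ ∑ x : Fin K → Bool, y' x * condT Bstar 1 x := hw
          _ = ∑ x : Fin K → Bool,
                y' x * condT (fun k n => Bstar k n / εstar) εstar x :=
              Finset.sum_congr rfl fun x _ => by rw [hTstar x]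
end

section
/- Let A ∈ ℝ^{K×N} be a feasible preamble selection matrix and ε ∈ [0,1]. Then the minimum of \tilde T(A,ε,y) over y in the relaxed uncertainty set \tilde P is attained, and it equals ε Σ_{k=1}^K Σ_{x∈{0,1}^K} p̲_x x_k − ε² Σ_{n=1}^N Σ_{k=1}^K a_{k,n} Σ_{ℓ>k} a_{ℓ,n} Σ_{x∈{0,1}^K} p̄_x x_k x_ℓ. -/
open Finset

/-- Approximate average throughput  \tilde T(A, ε, y) for a vector y. -/
noncomputable def tildeT {K N : ℕ} (A : Fin K → Fin N → ℝ) (ε : ℝ)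
    (y : (Fin K → Bool) → ℝ) : ℝ :=
  ε * ∑ k : Fin K, ∑ x : Fin K → Bool, y x * xv x k
  - ε ^ 2 * ∑ n : Fin N, ∑ k : Fin K, A k n *
      ∑ l ∈ Finset.univ.filter (fun l => k < l), A l n *
        ∑ x : Fin K → Bool, y x * xv x k * xv x l

/-- The relaxed uncertainty set 𝒫̃. -/
def PsetTilde {K : ℕ} (phat δ : (Fin K → Bool) → ℝ) : Set ((Fin K → Bool) → ℝ) :=
  {y | (∑ x : Fin K → Bool, y x = 1) ∧
    (∀ k : Fin K,
      ∑ x : Fin K → Bool, pl phat δ x * xv x k ≤ ∑ x : Fin K → Bool, y x * xv x k ∧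
      ∑ x : Fin K → Bool, y x * xv x k ≤ ∑ x : Fin K → Bool, pu phat δ x * xv x k) ∧
    (∀ k l : Fin K, k < l →
      ∑ x : Fin K → Bool, pl phat δ x * xv x k * xv x l ≤
        ∑ x : Fin K → Bool, y x * xv x k * xv x l ∧
      ∑ x : Fin K → Bool, y x * xv x k * xv x l ≤
        ∑ x : Fin K → Bool, pu phat δ x * xv x k * xv x l)}

def b0 (K : ℕ) : Fin K → Bool := fun _ => false
def b1 {K : ℕ} (k : Fin K) : Fin K → Bool := fun j => decide (j = k)
def b2 {K : ℕ} (k l : Fin K) : Fin K → Bool := fun j => decide (j = k) || decide (j = l)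

noncomputable def ycand {K : ℕ} (c0 : ℝ) (s : Fin K → ℝ) (Mu : Fin K → Fin K → ℝ) :
    (Fin K → Bool) → ℝ :=
  fun x => (if x = b0 K then c0 else 0) + (∑ k : Fin K, if x = b1 k then s k else 0) +
    ∑ k : Fin K, ∑ l ∈ Finset.univ.filter (fun l => k < l), if x = b2 k l then Mu k l else 0

lemma sum_delta {K : ℕ} (b : Fin K → Bool) (c : ℝ) (f : (Fin K → Bool) → ℝ) :
    ∑ x : Fin K → Bool, (if x = b then c else 0) * f x = c * f b := by
  simp [ite_mul, Finset.sum_ite_eq']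

lemma ycand_sum {K : ℕ} (c0 : ℝ) (s : Fin K → ℝ) (Mu : Fin K → Fin K → ℝ)
    (f : (Fin K → Bool) → ℝ) :
    ∑ x : Fin K → Bool, ycand c0 s Mu x * f x =
      c0 * f (b0 K) + (∑ k : Fin K, s k * f (b1 k)) +
      ∑ k : Fin K, ∑ l ∈ Finset.univ.filter (fun l => k < l), Mu k l * f (b2 k l) := by
  unfold ycand
  simp only [add_mul, Finset.sum_add_distrib, Finset.sum_mul]
  congr 1
  · congr 1
    · exact sum_delta _ _ f
    · rw [Finset.sum_comm]
      exact Finset.sum_congr rfl fun k _ => sum_delta _ _ f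
  · rw [Finset.sum_comm]
    refine Finset.sum_congr rfl fun k _ => ?_
    rw [Finset.sum_comm]
    exact Finset.sum_congr rfl fun l _ => sum_delta _ _ f

lemma xv_nonneg {K : ℕ} (x : Fin K → Bool) (k : Fin K) : 0 ≤ xv x k := by
  unfold xv; split <;> norm_num

lemma xv_b0 {K : ℕ} (j : Fin K) : xv (b0 K) j = 0 := by simp [xv, b0]

lemma xv_b1 {K : ℕ} (k j : Fin K) : xv (b1 k) j = if j = k then 1 else 0 := by
  simp [xv, b1]

lemma xv_b2 {K : ℕ} (k l j : Fin K) : xv (b2 k l) j = if j = k ∨ j = l then 1 else 0 := by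
  simp [xv, b2]

theorem stmt_11 (K N : ℕ) (hK : 1 ≤ K) (hN : 1 ≤ N)
    (phat δ : (Fin K → Bool) → ℝ)
    (hphat0 : ∀ x, 0 ≤ phat x) (hphat1 : ∑ x : Fin K → Bool, phat x = 1)
    (hδ : ∀ x, 0 ≤ δ x ∧ δ x < 1)
    (A : Fin K → Fin N → ℝ) (hA0 : ∀ k n, 0 ≤ A k n) (hA1 : ∀ k, ∑ n, A k n = 1)
    (ε : ℝ) (hε : ε ∈ Set.Icc (0 : ℝ) 1) :
    ∃ ystar ∈ PsetTilde phat δ,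
      (∀ y ∈ PsetTilde phat δ, tildeT A ε ystar ≤ tildeT A ε y) ∧
      tildeT A ε ystar =
        ε * ∑ k : Fin K, ∑ x : Fin K → Bool, pl phat δ x * xv x k
        - ε ^ 2 * ∑ n : Fin N, ∑ k : Fin K, A k n *
            ∑ l ∈ Finset.univ.filter (fun l => k < l), A l n *
              ∑ x : Fin K → Bool, pu phat δ x * xv x k * xv x l := by
  obtain ⟨hε0, hε1⟩ := hε
  -- target moments
  set m : Fin K → ℝ := fun k => ∑ x : Fin K → Bool, pl phat δ x * xv x k with hm
  set Mu : Fin K → Fin K → ℝ :=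
    fun k l => ∑ x : Fin K → Bool, pu phat δ x * xv x k * xv x l with hMu
  set R : Fin K → ℝ := fun j =>
    ∑ k : Fin K, ∑ l ∈ Finset.univ.filter (fun l => k < l), Mu k l * xv (b2 k l) j with hR
  set s : Fin K → ℝ := fun j => m j - R j with hs
  set c0 : ℝ := 1 - (∑ k : Fin K, s k)
      - ∑ k : Fin K, ∑ l ∈ Finset.univ.filter (fun l => k < l), Mu k l with hc0
  set ystar : (Fin K → Bool) → ℝ := ycand c0 s Mu with hystar
  -- basic bounds
  have hple : ∀ x, pl phat δ x ≤ pu phat δ x := by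
    intro x
    have h1 : phat x ≤ 1 := by
      rw [← hphat1]
      exact Finset.single_le_sum (fun i _ => hphat0 i) (Finset.mem_univ x)
    have hd := hδ x
    have h0 := hphat0 x
    unfold pl pu
    apply max_le
    · apply le_min <;> linarith
    · apply le_min <;> linarith
  -- moment computations for ystar
  have hM1 : ∀ j : Fin K, ∑ x : Fin K → Bool, ystar x * xv x j = m j := by
    intro j
    rw [hystar, ycand_sum c0 s Mu (fun x => xv x j)]
    have h1 : ∑ k : Fin K, s k * xv (b1 k) j = s j := by
      simp only [xv_b1, mul_ite, mul_one, mul_zero]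
      rw [Finset.sum_ite_eq Finset.univ j s]
      simp
    rw [xv_b0, h1]
    have h2 : ∑ k : Fin K, ∑ l ∈ Finset.univ.filter (fun l => k < l),
        Mu k l * xv (b2 k l) j = R j := rfl
    rw [h2, hs]
    ring
  have hM2 : ∀ j j' : Fin K, j < j' →
      ∑ x : Fin K → Bool, ystar x * xv x j * xv x j' = Mu j j' := by
    intro j j' hjj'
    have hne : j ≠ j' := ne_of_lt hjj'
    have hrw : ∀ x : Fin K → Bool, ystar x * xv x j * xv x j'
        = ystar x * (xv x j * xv x j') := fun x => by ring
    simp only [hrw]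
    rw [hystar, ycand_sum c0 s Mu (fun x => xv x j * xv x j')]
    have h0 : xv (b0 K) j * xv (b0 K) j' = 0 := by rw [xv_b0]; ring
    have h1 : ∑ k : Fin K, s k * (xv (b1 k) j * xv (b1 k) j') = 0 := by
      apply Finset.sum_eq_zero
      intro k _
      rw [xv_b1, xv_b1]
      by_cases h : j = k
      · have : j' ≠ k := fun hc => hne (h.trans hc.symm)
        simp [h, this]
      · simp [h]
    have h2 : ∑ k : Fin K, ∑ l ∈ Finset.univ.filter (fun l => k < l),
        Mu k l * (xv (b2 k l) j * xv (b2 k l) j') = Mu j j' := by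
      rw [Finset.sum_eq_single j]
      · rw [Finset.sum_eq_single_of_mem j' (by simp [hjj'])]
        · rw [xv_b2, xv_b2]
          simp [hne]
        · intro l hl hlj'
          have hjl : j < l := by simpa using hl
          rw [xv_b2, xv_b2]
          have hj'j : j' ≠ j := fun hc => hne hc.symm
          have hj'l : j' ≠ l := fun hc => hlj' hc.symm
          simp [hj'j, hj'l]
      · intro k _ hkj
        apply Finset.sum_eq_zero
        intro l hl
        have hkl : k < l := by simpa using hl
        rw [xv_b2, xv_b2]
        by_cases hjl : j = l
        · by_cases hj'k : j' = k
          · exfalso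
            rw [hjl] at hjj'
            rw [hj'k] at hjj'
            exact absurd (hjj'.trans hkl) (lt_irrefl l)
          · have hj'l : j' ≠ l := fun hc => hne (hjl.trans hc.symm)
            simp [hj'k, hj'l]
        · have hjk : j ≠ k := fun hc => hkj hc.symm
          simp [hjk, hjl]
      · intro h
        exact absurd (Finset.mem_univ j) h
    rw [h0, h1, h2]
    ring
  have hsum1 : ∑ x : Fin K → Bool, ystar x = 1 := by
    have h2 : ∑ x : Fin K → Bool, ystar x = c0 + (∑ k : Fin K, s k)
        + ∑ k : Fin K, ∑ l ∈ Finset.univ.filter (fun l => k < l), Mu k l := by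
      have h := ycand_sum c0 s Mu (fun _ => 1)
      simp only [mul_one] at h
      rw [hystar]
      exact h
    rw [h2, hc0]
    ring
  -- membership
  have hmem : ystar ∈ PsetTilde phat δ := by
    refine ⟨hsum1, ?_, ?_⟩
    · intro k
      rw [hM1 k]
      constructor
      · exact le_refl _
      · apply Finset.sum_le_sum
        intro x _
        exact mul_le_mul_of_nonneg_right (hple x) (xv_nonneg x k)
    · intro k l hkl
      rw [hM2 k l hkl]
      constructor
      · apply Finset.sum_le_sum
        intro x _
        exact mul_le_mul_of_nonneg_right
          (mul_le_mul_of_nonneg_right (hple x) (xv_nonneg x k)) (xv_nonneg x l)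
      · exact le_refl _
  -- value
  have hval : tildeT A ε ystar =
      ε * ∑ k : Fin K, ∑ x : Fin K → Bool, pl phat δ x * xv x k
      - ε ^ 2 * ∑ n : Fin N, ∑ k : Fin K, A k n *
          ∑ l ∈ Finset.univ.filter (fun l => k < l), A l n *
            ∑ x : Fin K → Bool, pu phat δ x * xv x k * xv x l := by
    unfold tildeT
    congr 1
    · congr 1
      exact Finset.sum_congr rfl fun k _ => hM1 k
    · congr 1
      refine Finset.sum_congr rfl fun n _ => ?_
      refine Finset.sum_congr rfl fun k _ => ?_
      congr 1
      refine Finset.sum_congr rfl fun l hl => ?_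
      have hkl : k < l := by simpa using hl
      rw [hM2 k l hkl]
  refine ⟨ystar, hmem, ?_, hval⟩
  intro y hy
  obtain ⟨hy1, hy2, hy3⟩ := hy
  rw [hval]
  unfold tildeT
  apply sub_le_sub
  · apply mul_le_mul_of_nonneg_left _ hε0
    apply Finset.sum_le_sum
    intro k _
    exact (hy2 k).1
  · apply mul_le_mul_of_nonneg_left _ (sq_nonneg ε)
    apply Finset.sum_le_sum
    intro n _
    apply Finset.sum_le_sum
    intro k _
    apply mul_le_mul_of_nonneg_left _ (hA0 k n)
    apply Finset.sum_le_sum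
    intro l hl
    have hkl : k < l := by simpa using hl
    exact mul_le_mul_of_nonneg_left (hy3 k l hkl).2 (hA0 l n)
end
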